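/- arXiv:2007.10856 — 5 statements merged into one kernel-verified Lean document; each statement's English description precedes it below -/
import Mathlib

section
/- Let u : ℝ³ → ℝ be a smooth (C^∞) function and define 𝔭u : ℝ³ → ℝ³ by (𝔭u)(x) = (∫₀¹ t² u(t·x) dt) · x. Then 𝔭u is differentiable and the null-homotopy identity ∇·(𝔭u)(x) = u(x) holds for every x ∈ ℝ³. -/
open MeasureTheory

/-- Divergence of a vector field on ℝ³. -/
noncomputable def pdiv (v : (Fin 3 → ℝ) → (Fin 3 → ℝ)) (x : Fin 3 → ℝ) : ℝ :=
  ∑ i : Fin 3, fderiv ℝ (fun y => v y i) x (Pi.single i 1)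

/-- Curl of a vector field on ℝ³. -/
noncomputable def pcurl (v : (Fin 3 → ℝ) → (Fin 3 → ℝ)) (x : Fin 3 → ℝ) : Fin 3 → ℝ :=
  ![fderiv ℝ (fun y => v y 2) x (Pi.single 1 1) - fderiv ℝ (fun y => v y 1) x (Pi.single 2 1),
    fderiv ℝ (fun y => v y 0) x (Pi.single 2 1) - fderiv ℝ (fun y => v y 2) x (Pi.single 0 1),
    fderiv ℝ (fun y => v y 1) x (Pi.single 0 1) - fderiv ℝ (fun y => v y 0) x (Pi.single 1 1)]

/-- Gradient of a scalar field on ℝ³. -/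
noncomputable def pgrad (p : (Fin 3 → ℝ) → ℝ) (x : Fin 3 → ℝ) : Fin 3 → ℝ :=
  fun i => fderiv ℝ p x (Pi.single i 1)

/-- The Poincaré-type operator 𝔭: (𝔭u)(x) = (∫₀¹ t² u(tx) dt) x. -/
noncomputable def poin (u : (Fin 3 → ℝ) → ℝ) (x : Fin 3 → ℝ) : Fin 3 → ℝ :=
  (∫ t in (0:ℝ)..1, t ^ 2 * u (t • x)) • x

/-- `u` is a polynomial function of total degree at most `r` (P_r = {0} if r < 0). -/
def IsPolyDeg (r : ℤ) (u : (Fin 3 → ℝ) → ℝ) : Prop :=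
  ∃ p : MvPolynomial (Fin 3) ℝ, (p = 0 ∨ (p.totalDegree : ℤ) ≤ r) ∧
    ∀ x, MvPolynomial.eval x p = u x

/-- `v` is a vector field with polynomial components of total degree at most `r`. -/
def IsVecPolyDeg (r : ℤ) (v : (Fin 3 → ℝ) → (Fin 3 → ℝ)) : Prop :=
  ∀ i, IsPolyDeg r fun x => v x i

/-- `u` is a polynomial function. -/
def IsPolyFun (u : (Fin 3 → ℝ) → ℝ) : Prop :=
  ∃ p : MvPolynomial (Fin 3) ℝ, ∀ x, MvPolynomial.eval x p = u x

/-- Membership in S_k = {p ∈ (P̃_k)³ : x·p(x) = 0}. -/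
def MemS (k : ℕ) (v : (Fin 3 → ℝ) → (Fin 3 → ℝ)) : Prop :=
  (∀ i, ∃ p : MvPolynomial (Fin 3) ℝ, p.IsHomogeneous k ∧ ∀ x, MvPolynomial.eval x p = v x i) ∧
    ∀ x, ∑ i : Fin 3, x i * v x i = 0

/-- Membership in the first-family Nédélec space R_k = 𝐏_{k-1} ⊕ S_k. -/
def MemR (k : ℕ) (v : (Fin 3 → ℝ) → (Fin 3 → ℝ)) : Prop :=
  ∃ v₁ v₂, IsVecPolyDeg ((k : ℤ) - 1) v₁ ∧ MemS k v₂ ∧ v = v₁ + v₂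

open Metric intervalIntegral Set Interval in
theorem keyD (u : (Fin 3 → ℝ) → ℝ) (hu : ContDiff ℝ (⊤ : ℕ∞) u) (x₀ : Fin 3 → ℝ) :
    HasFDerivAt (fun x => ∫ t in (0:ℝ)..1, t ^ 2 * u (t • x))
      (∫ t in (0:ℝ)..1,
        (t ^ 2 : ℝ) • ((fderiv ℝ u (t • x₀)).comp
          (t • ContinuousLinearMap.id ℝ (Fin 3 → ℝ)))) x₀ := by
  have hud : Differentiable ℝ u := hu.differentiable (by simp)
  have hfc : Continuous (fderiv ℝ u) := hu.continuous_fderiv (by simp)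
  set F' : (Fin 3 → ℝ) → ℝ → (Fin 3 → ℝ) →L[ℝ] ℝ := fun x t =>
    (t ^ 2 : ℝ) • ((fderiv ℝ u (t • x)).comp (t • ContinuousLinearMap.id ℝ (Fin 3 → ℝ)))
    with hF'
  obtain ⟨C, hC⟩ : ∃ C, ∀ y ∈ closedBall (0 : Fin 3 → ℝ) (‖x₀‖ + 1), ‖fderiv ℝ u y‖ ≤ C :=
    (isCompact_closedBall _ _).exists_bound_of_continuousOn hfc.continuousOn
  have hdiff : ∀ (t : ℝ) (x : Fin 3 → ℝ),
      HasFDerivAt (fun x => t ^ 2 * u (t • x)) (F' x t) x := by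
    intro t x
    have h1 : HasFDerivAt (fun x : Fin 3 → ℝ => t • x)
        (t • ContinuousLinearMap.id ℝ (Fin 3 → ℝ)) x := by
      simpa using (t • ContinuousLinearMap.id ℝ (Fin 3 → ℝ)).hasFDerivAt (x := x)
    have h2 := ((hud (t • x)).hasFDerivAt.comp x h1).const_smul (t ^ 2)
    exact h2
  have hbound : ∀ t ∈ Ι (0:ℝ) 1, ∀ x ∈ ball x₀ 1, ‖F' x t‖ ≤ C := by
    intro t ht x hx
    rw [uIoc_of_le zero_le_one] at ht
    have habs : |t| ≤ 1 := by rw [abs_of_pos ht.1]; exact ht.2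
    have hmem : t • x ∈ closedBall (0 : Fin 3 → ℝ) (‖x₀‖ + 1) := by
      have h2 : ‖x‖ ≤ ‖x₀‖ + 1 := by
        have h := norm_add_le (x - x₀) x₀
        rw [sub_add_cancel] at h
        have hb := mem_ball_iff_norm.mp hx
        linarith
      simp only [mem_closedBall, dist_zero_right, norm_smul, Real.norm_eq_abs]
      calc |t| * ‖x‖ ≤ 1 * (‖x₀‖ + 1) :=
            mul_le_mul habs h2 (norm_nonneg _) zero_le_one
        _ = ‖x₀‖ + 1 := one_mul _
    have hA : ‖fderiv ℝ u (t • x)‖ ≤ C := hC _ hmem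
    have hC0 : 0 ≤ C := le_trans (norm_nonneg _) hA
    have hB : ‖t • ContinuousLinearMap.id ℝ (Fin 3 → ℝ)‖ ≤ |t| := by
      have := norm_smul t (ContinuousLinearMap.id ℝ (Fin 3 → ℝ))
      rw [this, Real.norm_eq_abs]
      calc |t| * ‖ContinuousLinearMap.id ℝ (Fin 3 → ℝ)‖ ≤ |t| * 1 := by
            gcongr; exact ContinuousLinearMap.norm_id_le
        _ = |t| := mul_one _
    have hcomp : ‖(fderiv ℝ u (t • x)).comp (t • ContinuousLinearMap.id ℝ (Fin 3 → ℝ))‖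
        ≤ C * |t| :=
      (ContinuousLinearMap.opNorm_comp_le _ _).trans
        (mul_le_mul hA hB (norm_nonneg _) hC0)
    have h4 : ‖F' x t‖ = |t| ^ 2 *
        ‖(fderiv ℝ u (t • x)).comp (t • ContinuousLinearMap.id ℝ (Fin 3 → ℝ))‖ := by
      have := norm_smul (t ^ 2) ((fderiv ℝ u (t • x)).comp (t • ContinuousLinearMap.id ℝ (Fin 3 → ℝ)))
      simp only [hF']
      rw [this, Real.norm_eq_abs, abs_pow]
    have h5 : ‖F' x t‖ ≤ |t| ^ 2 * (C * |t|) := by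
      rw [h4]; gcongr
    have h7 : |t| ^ 3 ≤ 1 := pow_le_one₀ (abs_nonneg t) habs
    nlinarith [abs_nonneg t, norm_nonneg (F' x t), mul_le_mul_of_nonneg_left h7 hC0]
  have hFcont : ∀ x : Fin 3 → ℝ, Continuous (fun t : ℝ => t ^ 2 * u (t • x)) := fun x =>
    (continuous_pow 2).mul (hu.continuous.comp (continuous_id.smul continuous_const))
  have hF'cont : Continuous (F' x₀) := by
    apply Continuous.smul (continuous_pow 2)
    exact (hfc.comp (continuous_id.smul continuous_const)).clm_comp
      (continuous_id.smul continuous_const)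
  exact hasFDerivAt_integral_of_dominated_of_fderiv_le (𝕜 := ℝ) (ball_mem_nhds x₀ zero_lt_one)
    (Filter.Eventually.of_forall fun x => (hFcont x).aestronglyMeasurable)
    ((hFcont x₀).intervalIntegrable 0 1)
    hF'cont.aestronglyMeasurable
    (Filter.Eventually.of_forall hbound)
    (intervalIntegrable_const)
    (Filter.Eventually.of_forall fun t ht x _ => hdiff t x)

/-- null-homotopy identity ∇·(𝔭u) = u for smooth u. -/
theorem stmt_0 (u : (Fin 3 → ℝ) → ℝ) (hu : ContDiff ℝ (⊤ : ℕ∞) u) :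
    Differentiable ℝ (poin u) ∧ ∀ x, pdiv (poin u) x = u x := by
  have hud : Differentiable ℝ u := hu.differentiable (by simp)
  have hfc : Continuous (fderiv ℝ u) := hu.continuous_fderiv (by simp)
  set G : (Fin 3 → ℝ) → ℝ := fun x => ∫ t in (0:ℝ)..1, t ^ 2 * u (t • x) with hGdef
  have hG : ∀ x, HasFDerivAt G
      (∫ t in (0:ℝ)..1, (t ^ 2 : ℝ) • ((fderiv ℝ u (t • x)).comp
        (t • ContinuousLinearMap.id ℝ (Fin 3 → ℝ)))) x := keyD u hu
  have hpoin : poin u = fun x => G x • x := by funext x; rfl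
  constructor
  · rw [hpoin]
    exact fun x => ((hG x).differentiableAt.smul differentiableAt_id)
  intro x
  set D : (Fin 3 → ℝ) →L[ℝ] ℝ := ∫ t in (0:ℝ)..1,
      (t ^ 2 : ℝ) • ((fderiv ℝ u (t • x)).comp
        (t • ContinuousLinearMap.id ℝ (Fin 3 → ℝ))) with hDdef
  -- derivative of each component
  have hcomp : ∀ i : Fin 3, fderiv ℝ (fun y => poin u y i) x
      = G x • (ContinuousLinearMap.proj i : (Fin 3 → ℝ) →L[ℝ] ℝ) + x i • D := by
    intro i
    have hp : HasFDerivAt (fun y : Fin 3 → ℝ => y i)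
        (ContinuousLinearMap.proj i : (Fin 3 → ℝ) →L[ℝ] ℝ) x :=
      (ContinuousLinearMap.proj i : (Fin 3 → ℝ) →L[ℝ] ℝ).hasFDerivAt
    have h := ((hG x).mul hp)
    have he : (fun y => poin u y i) = fun y => G y * y i := by
      funext y; simp [poin, hGdef]
    rw [he]
    exact h.fderiv
  -- evaluate pdiv
  have hDx : D x = ∑ i : Fin 3, x i * D (Pi.single i 1) := by
    have hx : x = ∑ i : Fin 3, Pi.single i (x i) := (Finset.univ_sum_single x).symm
    conv_lhs => rw [hx]
    rw [map_sum]
    refine Finset.sum_congr rfl fun i _ => ?_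
    have : Pi.single i (x i) = x i • (Pi.single i 1 : Fin 3 → ℝ) := by
      rw [← Pi.single_smul, smul_eq_mul, mul_one]
    rw [this, _root_.map_smul, smul_eq_mul]
  have hpd : pdiv (poin u) x = 3 * G x + D x := by
    rw [pdiv]
    simp only [hcomp, ContinuousLinearMap.add_apply, ContinuousLinearMap.smul_apply,
      ContinuousLinearMap.proj_apply, Pi.single_eq_same, smul_eq_mul, mul_one]
    rw [Finset.sum_add_distrib, hDx]
    simp [Fin.sum_univ_three]
    try ring
  rw [hpd]
  -- evaluate D x as an integral
  have hF'cont : Continuous (fun t : ℝ =>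
      (t ^ 2 : ℝ) • ((fderiv ℝ u (t • x)).comp
        (t • ContinuousLinearMap.id ℝ (Fin 3 → ℝ)))) := by
    apply Continuous.smul (continuous_pow 2)
    exact (hfc.comp (continuous_id.smul continuous_const)).clm_comp
      (continuous_id.smul continuous_const)
  have hDx2 : D x = ∫ t in (0:ℝ)..1, t ^ 3 * (fderiv ℝ u (t • x)) x := by
    rw [hDdef, intervalIntegral.integral_of_le zero_le_one,
        intervalIntegral.integral_of_le zero_le_one,
        ContinuousLinearMap.integral_apply (hF'cont.integrableOn_Ioc)]
    refine setIntegral_congr_fun measurableSet_Ioc fun t _ => ?_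
    simp only [ContinuousLinearMap.smul_apply, ContinuousLinearMap.comp_apply,
      ContinuousLinearMap.smul_apply, ContinuousLinearMap.id_apply, _root_.map_smul,
      smul_eq_mul]
    ring
  -- FTC
  have hφ : ∀ t : ℝ, HasDerivAt (fun s : ℝ => s ^ 3 * u (s • x))
      (3 * (t ^ 2 * u (t • x)) + t ^ 3 * (fderiv ℝ u (t • x)) x) t := by
    intro t
    have hψ : HasDerivAt (fun s : ℝ => u (s • x)) ((fderiv ℝ u (t • x)) x) t := by
      have hin : HasDerivAt (fun s : ℝ => s • x) x t := by
        simpa using (hasDerivAt_id t).smul_const x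
      exact (hud (t • x)).hasFDerivAt.comp_hasDerivAt t hin
    have := (hasDerivAt_pow 3 t).mul hψ
    exact this.congr_deriv (by push_cast; ring)
  have hcont1 : Continuous fun t : ℝ => 3 * (t ^ 2 * u (t • x)) :=
    continuous_const.mul ((continuous_pow 2).mul
      (hu.continuous.comp (continuous_id.smul continuous_const)))
  have hcont2 : Continuous fun t : ℝ => t ^ 3 * (fderiv ℝ u (t • x)) x :=
    (continuous_pow 3).mul
      ((hfc.comp (continuous_id.smul continuous_const)).clm_apply continuous_const)
  have hFTC : (∫ t in (0:ℝ)..1,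
      (3 * (t ^ 2 * u (t • x)) + t ^ 3 * (fderiv ℝ u (t • x)) x)) = u x := by
    rw [intervalIntegral.integral_eq_sub_of_hasDerivAt
      (fun t _ => hφ t) ((hcont1.add hcont2).intervalIntegrable 0 1)]
    simp
  rw [hDx2]
  simp only [hGdef]
  rw [← intervalIntegral.integral_const_mul,
    ← intervalIntegral.integral_add (hcont1.intervalIntegrable 0 1)
      (hcont2.intervalIntegrable 0 1), hFTC]
end

section
/- The operator 𝔭 is polynomial preserving: if u : ℝ³ → ℝ is a polynomial function of total degree at most r, then there exist polynomial functions q₁, q₂, q₃ : ℝ³ → ℝ, each of total degree at most r+1, such that (𝔭u)(x) = (q₁(x), q₂(x), q₃(x)) for all x ∈ ℝ³; that is, 𝔭(P_r) ⊆ 𝐏_{r+1}. -/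
open MeasureTheory

/-!
Split `u` into its homogeneous components `u_d`. Since `u_d (t • x) = t ^ d * u_d x`, the integral
`∫₀¹ t² u(t x) dt` equals `∑_d u_d(x) / (d + 3)`, a polynomial in `x` of degree at most `r`;
multiplying it by `x` raises the degree by one.
-/

open MvPolynomial

namespace MvPolynomial

variable {σ : Type*}

theorem IsHomogeneous.eval_smul {R : Type*} [CommSemiring R] {φ : MvPolynomial σ R} {n : ℕ}
    (hφ : φ.IsHomogeneous n) (t : R) (x : σ → R) :
    eval (t • x) φ = t ^ n * eval x φ := by
  rw [eval_eq, eval_eq, Finset.mul_sum]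
  refine Finset.sum_congr rfl fun d hd => ?_
  have hd : d.degree = n := by
    rw [Finsupp.degree_eq_weight_one]; exact hφ (mem_support_iff.mp hd)
  simp only [Pi.smul_apply, smul_eq_mul, mul_pow, Finset.prod_mul_distrib,
    Finset.prod_pow_eq_pow_sum, ← Finsupp.degree_apply, hd]
  ring

noncomputable def radialMoment (k : ℕ) (p : MvPolynomial σ ℝ) : MvPolynomial σ ℝ :=
  ∑ d ∈ Finset.range (p.totalDegree + 1), ((d + k + 1 : ℝ)⁻¹) • homogeneousComponent d p

theorem totalDegree_radialMoment_le (k : ℕ) (p : MvPolynomial σ ℝ) :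
    (radialMoment k p).totalDegree ≤ p.totalDegree :=
  totalDegree_finsetSum_le fun d hd =>
    (totalDegree_smul_le _ _).trans <| (homogeneousComponent_isHomogeneous d p).totalDegree_le.trans
      (Nat.lt_succ_iff.mp (Finset.mem_range.mp hd))

theorem integral_pow_mul_eval_smul (k : ℕ) (p : MvPolynomial σ ℝ) (x : σ → ℝ) :
    ∫ t in (0 : ℝ)..1, t ^ k * eval (t • x) p = eval x (radialMoment k p) := by
  have hexpand : ∀ t : ℝ, t ^ k * eval (t • x) p =
      ∑ d ∈ Finset.range (p.totalDegree + 1), eval x (homogeneousComponent d p) * t ^ (d + k) := by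
    intro t
    conv_lhs => rw [← sum_homogeneousComponent p]
    simp only [map_sum, Finset.mul_sum, (homogeneousComponent_isHomogeneous _ p).eval_smul]
    exact Finset.sum_congr rfl fun d _ => by ring
  simp only [hexpand, radialMoment, map_sum, smul_eval]
  rw [intervalIntegral.integral_finsetSum fun d _ =>
    (intervalIntegral.intervalIntegrable_pow _).const_mul _]
  refine Finset.sum_congr rfl fun d _ => ?_
  rw [intervalIntegral.integral_const_mul, integral_pow]
  push_cast
  ring

end MvPolynomial

/-- 𝔭 is polynomial preserving: 𝔭(P_r) ⊆ 𝐏_{r+1}. -/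
theorem stmt_2 (r : ℕ) (u : (Fin 3 → ℝ) → ℝ) (hu : IsPolyDeg (r : ℤ) u) :
    ∃ q : Fin 3 → (Fin 3 → ℝ) → ℝ, (∀ i, IsPolyDeg ((r : ℤ) + 1) (q i)) ∧
      ∀ x i, poin u x i = q i x := by
  obtain ⟨p, hdeg, rfl⟩ : ∃ p : MvPolynomial (Fin 3) ℝ, p.totalDegree ≤ r ∧ u = (eval · p) := by
    obtain ⟨p, hdeg, hp⟩ := hu
    refine ⟨p, ?_, funext fun x => (hp x).symm⟩
    rcases hdeg with rfl | hdeg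
    · simp
    · exact_mod_cast hdeg
  refine ⟨fun i x => eval x (radialMoment 2 p * X i), fun i => ⟨_, Or.inr ?_, fun _ => rfl⟩,
    fun x i => ?_⟩
  · have := (totalDegree_mul (radialMoment 2 p) (X i)).trans
      (add_le_add (totalDegree_radialMoment_le 2 p) (totalDegree_X i).le)
    omega
  · simp [poin, integral_pow_mul_eval_smul]
end

section
/- Polynomial Poincaré lemma for the gradient: if v ∈ 𝐏_r is a vector field on ℝ³ with polynomial components of total degree at most r and ∇×v = 0 everywhere on ℝ³, then there exists a polynomial p ∈ P_{r+1} such that v = ∇p. -/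
open MeasureTheory

/-!
A curl-free polynomial field `q` has a symmetric Jacobian, `∂ⱼ qᵢ = ∂ᵢ qⱼ`, and this symmetry passes
to every homogeneous component. For a symmetric family `q` homogeneous of degree `n`, Euler's identity
gives `∂ⱼ (∑ᵢ xᵢ qᵢ) = qⱼ + ∑ᵢ xᵢ ∂ᵢ qⱼ = (n + 1) qⱼ`, so
`P = ∑ₙ (n + 1)⁻¹ ∑ᵢ xᵢ qᵢ⁽ⁿ⁾` is a potential of degree at most `r + 1`
(the algebraic form of the radial homotopy `∫₀¹ x · q(t x) dt`).
-/

namespace MvPolynomial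

section Algebra

variable {σ R : Type*} [CommSemiring R]

theorem pderiv_homogeneousComponent_succ (j : σ) (n : ℕ) (p : MvPolynomial σ R) :
    pderiv j (homogeneousComponent (n + 1) p) = homogeneousComponent n (pderiv j p) := by
  classical
  ext m
  simp only [coeff_pderiv, coeff_homogeneousComponent, map_add, Finsupp.degree_single,
    add_left_inj]
  split_ifs <;> simp

theorem pderiv_homogeneousComponent_comm {q : σ → MvPolynomial σ R}
    (hq : ∀ i j, pderiv j (q i) = pderiv i (q j)) (n : ℕ) (i j : σ) :
    pderiv j (homogeneousComponent n (q i)) = pderiv i (homogeneousComponent n (q j)) := by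
  cases n with
  | zero => simp only [homogeneousComponent_zero, pderiv_C]
  | succ n => rw [pderiv_homogeneousComponent_succ, pderiv_homogeneousComponent_succ, hq]

theorem sum_range_homogeneousComponent {p : MvPolynomial σ R} {r : ℕ}
    (hp : p.totalDegree ≤ r) :
    ∑ n ∈ Finset.range (r + 1), homogeneousComponent n p = p := by
  conv_rhs => rw [← sum_homogeneousComponent p]
  refine (Finset.sum_subset (Finset.range_subset_range.2 (by omega)) fun n _ hn => ?_).symm
  exact homogeneousComponent_eq_zero n p (by simpa using hn)

variable [Fintype σ]

theorem pderiv_sum_X_mul_of_isHomogeneous {q : σ → MvPolynomial σ R} {n : ℕ}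
    (hhom : ∀ i, (q i).IsHomogeneous n) (hq : ∀ i j, pderiv j (q i) = pderiv i (q j)) (j : σ) :
    pderiv j (∑ i, X i * q i) = (n + 1) • q j := by
  classical
  simp only [map_sum, pderiv_mul, pderiv_X, hq _ j, Finset.sum_add_distrib,
    (hhom j).sum_X_mul_pderiv]
  simp [Pi.single_apply, add_smul, add_comm]

theorem exists_pderiv_eq_of_pderiv_comm {K : Type*} [Field K] [CharZero K]
    {q : σ → MvPolynomial σ K} {r : ℕ} (hdeg : ∀ i, (q i).totalDegree ≤ r)
    (hq : ∀ i j, pderiv j (q i) = pderiv i (q j)) :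
    ∃ P : MvPolynomial σ K, P.totalDegree ≤ r + 1 ∧ ∀ j, pderiv j P = q j := by
  have hhom (n : ℕ) : (∑ i, X i * homogeneousComponent n (q i)).IsHomogeneous (n + 1) :=
    IsHomogeneous.sum _ _ _ fun i _ =>
      add_comm 1 n ▸ (isHomogeneous_X K i).mul (homogeneousComponent_isHomogeneous n (q i))
  refine ⟨∑ n ∈ Finset.range (r + 1),
    ((n : K) + 1)⁻¹ • ∑ i, X i * homogeneousComponent n (q i), ?_, fun j => ?_⟩
  · refine (totalDegree_finsetSum _ _).trans (Finset.sup_le fun n hn => ?_)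
    refine (totalDegree_smul_le _ _).trans ((hhom n).totalDegree_le.trans ?_)
    simp only [Finset.mem_range] at hn
    omega
  · have hterm (n : ℕ) :
        pderiv j (((n : K) + 1)⁻¹ • ∑ i, X i * homogeneousComponent n (q i)) =
          homogeneousComponent n (q j) := by
      rw [Derivation.map_smul, pderiv_sum_X_mul_of_isHomogeneous
        (fun i => homogeneousComponent_isHomogeneous n (q i))
        (pderiv_homogeneousComponent_comm hq n), ← Nat.cast_smul_eq_nsmul K, smul_smul]
      push_cast
      rw [inv_mul_cancel₀ (Nat.cast_add_one_ne_zero n), one_smul]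
    simp only [map_sum, hterm, sum_range_homogeneousComponent (hdeg j)]

end Algebra

section Analysis

variable {σ 𝕜 : Type*} [Fintype σ] [NontriviallyNormedField 𝕜]

theorem differentiable_eval (q : MvPolynomial σ 𝕜) :
    Differentiable 𝕜 fun y : σ → 𝕜 => eval y q := by
  induction q using MvPolynomial.induction_on with
  | C a => simp
  | add p q hp hq => simp only [eval_add]; exact hp.add hq
  | mul_X p n hp => simp only [eval_mul, eval_X]; exact hp.mul (differentiable_apply n)

theorem fderiv_eval_apply_single [DecidableEq σ] (q : MvPolynomial σ 𝕜) (x : σ → 𝕜) (i : σ) :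
    fderiv 𝕜 (fun y => eval y q) x (Pi.single i 1) = eval x (pderiv i q) := by
  induction q using MvPolynomial.induction_on with
  | C a => simp
  | add p q hp hq =>
    simp only [map_add]
    rw [fderiv_fun_add (differentiable_eval p x) (differentiable_eval q x)]
    simp [hp, hq]
  | mul_X p n hp =>
    simp only [eval_mul, eval_X]
    rw [fderiv_fun_mul (differentiable_eval p x) (differentiableAt_apply n x),
      (hasFDerivAt_apply n x).fderiv]
    simp [hp, pderiv_X, Pi.single_apply, apply_ite (eval x)]

end Analysis

end MvPolynomial

open MvPolynomial

theorem pgrad_eval (P : MvPolynomial (Fin 3) ℝ) (x : Fin 3 → ℝ) :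
    pgrad (fun y => eval y P) x = fun i => eval x (pderiv i P) :=
  funext fun i => fderiv_eval_apply_single P x i

theorem pderiv_comm_of_pcurl_eval_eq_zero (q : Fin 3 → MvPolynomial (Fin 3) ℝ)
    (hcurl : ∀ x, pcurl (fun y i => eval y (q i)) x = 0) (i j : Fin 3) :
    pderiv j (q i) = pderiv i (q j) := by
  fin_cases i <;> fin_cases j <;> try rfl
  all_goals
    refine MvPolynomial.funext fun x => ?_
    have h := hcurl x
    simp only [pcurl, fderiv_eval_apply_single, Matrix.cons_eq_zero_iff, sub_eq_zero] at h
    simp [h]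

/-- polynomial Poincaré lemma for the gradient. -/
theorem stmt_6 (r : ℕ) (v : (Fin 3 → ℝ) → (Fin 3 → ℝ)) (hv : IsVecPolyDeg (r : ℤ) v)
    (hcurl : ∀ x, pcurl v x = 0) :
    ∃ p : (Fin 3 → ℝ) → ℝ, IsPolyDeg ((r : ℤ) + 1) p ∧ ∀ x, v x = pgrad p x := by
  choose q hq using hv
  obtain rfl : v = fun y i => eval y (q i) := funext fun y => funext fun i => ((hq i).2 y).symm
  have hdeg (i : Fin 3) : (q i).totalDegree ≤ r :=
    (hq i).1.elim (fun h => by simp [h]) (by exact_mod_cast ·)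
  obtain ⟨P, hPdeg, hP⟩ :=
    exists_pderiv_eq_of_pderiv_comm hdeg (pderiv_comm_of_pcurl_eval_eq_zero q hcurl)
  refine ⟨fun y => eval y P, ⟨P, Or.inr (by exact_mod_cast hPdeg), fun _ => rfl⟩, fun x => ?_⟩
  simp [pgrad_eval, hP]
end

section
/- For every integer k ≥ 1, the sum R_k = 𝐏_{k−1} + S_k is direct (𝐏_{k−1} ∩ S_k = {0}) and its dimension is dim R_k = k(k+2)(k+3)/2. -/
open MeasureTheory

/-! Via evaluation, `R_k` is the space of `p ∈ (P_k)³` with `[x · p]_{k+1} = 0`, where `[·]_n` is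
the homogeneous component of degree `n`: such a `p` splits as `(p - [p]_k) + [p]_k`, and
`[x · p]_{k+1} = x · [p]_k`. The map `p ↦ [x · p]_{k+1}` from `(P_k)³` to `P̃_{k+1}` is onto, since a
monomial of degree `k+1` is some `x_i` times a monomial of degree `k`. Hence
`dim R_k = 3 dim P_k - dim P̃_{k+1} = 3 C(k+3,3) - C(k+3,2) = k(k+2)(k+3)/2`. The sum is direct
because a polynomial of degree `≤ k-1` that is homogeneous of degree `k` vanishes. -/

open MvPolynomial Finset

namespace Finsupp

variable {σ : Type*} [Fintype σ]

theorem natCard_setOf_degree_eq (n : ℕ) :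
    Nat.card {d : σ →₀ ℕ | d.degree = n} = (Fintype.card σ).multichoose n := by
  classical
  have h : {d : σ →₀ ℕ | d.degree = n} = (univ.finsuppAntidiag n : Finset (σ →₀ ℕ)) := by
    ext d
    simp [mem_finsuppAntidiag, degree_eq_sum]
  rw [h, Nat.card_coe_set_eq, Set.ncard_coe_finset, card_finsuppAntidiag_nat_eq_multichoose,
    card_univ]

theorem natCard_setOf_degree_le (n : ℕ) :
    Nat.card {d : σ →₀ ℕ | d.degree ≤ n} = (n + Fintype.card σ).choose (Fintype.card σ) := by
  classical
  have h : {d : σ →₀ ℕ | d.degree ≤ n} =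
      ((range (n + 1)).biUnion fun m => univ.finsuppAntidiag m : Finset (σ →₀ ℕ)) := by
    ext d
    simp [mem_finsuppAntidiag, degree_eq_sum]
  rw [h, Nat.card_coe_set_eq, Set.ncard_coe_finset, card_biUnion, ← Nat.sum_range_multichoose]
  · simp [card_finsuppAntidiag_nat_eq_multichoose]
  · intro a _ b _ hab
    refine Finset.disjoint_left.2 fun d hda hdb => hab ?_
    rw [mem_finsuppAntidiag] at hda hdb
    rw [← hda.1, hdb.1]

end Finsupp

namespace MvPolynomial

section CommSemiring

variable {σ R : Type*} [CommSemiring R]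

theorem homogeneousComponent_mul_of_isHomogeneous {φ : MvPolynomial σ R} {m : ℕ}
    (hφ : φ.IsHomogeneous m) (n : ℕ) (ψ : MvPolynomial σ R) :
    homogeneousComponent (m + n) (φ * ψ) = φ * homogeneousComponent n ψ := by
  induction ψ using MvPolynomial.induction_on' with
  | monomial d c =>
    rw [homogeneousComponent_of_mem (isHomogeneous_monomial c rfl),
      homogeneousComponent_of_mem (hφ.mul (isHomogeneous_monomial c rfl))]
    split_ifs <;> simp_all
  | add p q hp hq => simp [mul_add, hp, hq]

theorem zero_or_totalDegree_le_iff {p : MvPolynomial σ R} {r : ℤ} :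
    (p = 0 ∨ (p.totalDegree : ℤ) ≤ r) ↔ ∀ d ∈ p.support, (d.degree : ℤ) ≤ r := by
  constructor
  · rintro (rfl | h) d hd
    · simp at hd
    · exact le_trans (by exact_mod_cast le_totalDegree hd) h
  · intro h
    rcases eq_or_ne p 0 with rfl | hp
    · exact Or.inl rfl
    obtain ⟨d, hd, hsup⟩ := Finset.exists_mem_eq_sup p.support (support_nonempty.2 hp)
      fun s => s.sum fun _ e => e
    rw [totalDegree, hsup]
    exact Or.inr (h d hd)

/-- `p ∈ P_{k-1}` without integer degrees; for `k = 0` both sides say `p = 0`. -/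
theorem zero_or_totalDegree_le_sub_one_iff {p : MvPolynomial σ R} {k : ℕ} :
    (p = 0 ∨ (p.totalDegree : ℤ) ≤ k - 1) ↔
      p.totalDegree ≤ k ∧ homogeneousComponent k p = 0 := by
  rw [zero_or_totalDegree_le_iff]
  constructor
  · intro h
    refine ⟨Finset.sup_le fun d hd => ?_, homogeneousComponent_eq_zero' _ _ fun d hd => ?_⟩
    · show d.degree ≤ k
      have := h d hd
      omega
    · have := h d hd
      omega
  · rintro ⟨hp, h0⟩ d hd
    have hle : d.degree ≤ k := (le_totalDegree hd).trans hp
    have hne : d.degree ≠ k := fun hdk => mem_support_iff.1 hd <| by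
      simpa [coeff_homogeneousComponent, hdk] using congr_arg (coeff d) h0
    omega

section evalPi

variable {ι : Type*}

variable (σ R) in
noncomputable def evalPi : (ι → MvPolynomial σ R) →ₗ[R] (σ → R) → ι → R where
  toFun p x i := eval x (p i)
  map_add' p q := by ext; simp
  map_smul' c p := by ext; simp [smul_eval]

theorem evalPi_apply (p : ι → MvPolynomial σ R) (x : σ → R) (i : ι) :
    evalPi σ R p x i = eval x (p i) :=
  rfl

end evalPi

variable [Fintype σ]

variable (σ R) in
noncomputable def dotX : (σ → MvPolynomial σ R) →ₗ[R] MvPolynomial σ R :=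
  ∑ i, LinearMap.mulLeft R (X i) ∘ₗ LinearMap.proj i

theorem dotX_apply (p : σ → MvPolynomial σ R) : dotX σ R p = ∑ i, X i * p i := by
  simp [dotX]

theorem eval_dotX (x : σ → R) (p : σ → MvPolynomial σ R) :
    eval x (dotX σ R p) = ∑ i, x i * eval x (p i) := by
  simp [dotX_apply]

theorem homogeneousComponent_dotX (n : ℕ) (p : σ → MvPolynomial σ R) :
    homogeneousComponent (n + 1) (dotX σ R p) = dotX σ R fun i => homogeneousComponent n (p i) := by
  simp only [dotX_apply, map_sum, add_comm n 1,
    homogeneousComponent_mul_of_isHomogeneous (isHomogeneous_X R _)]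

theorem homogeneousSubmodule_succ_le_map_dotX (n : ℕ) :
    homogeneousSubmodule σ R (n + 1) ≤
      (Submodule.pi Set.univ fun _ => homogeneousSubmodule σ R n).map (dotX σ R) := by
  classical
  rw [homogeneousSubmodule_eq_finsupp_supported, AddMonoidAlgebra.supported_eq_span_single,
    Submodule.span_le]
  rintro _ ⟨d, hd : d.degree = n + 1, rfl⟩
  obtain ⟨i, hi⟩ : ∃ i, d i ≠ 0 := Finsupp.ne_iff.1 (show d ≠ 0 by rintro rfl; simp at hd)
  have hdi : d = Finsupp.single i 1 + (d - Finsupp.single i 1) := by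
    rw [add_tsub_cancel_of_le (Finsupp.single_le_iff.2 (Nat.one_le_iff_ne_zero.2 hi))]
  refine ⟨Pi.single i (monomial (d - Finsupp.single i 1) (1 : R)), fun j _ => ?_, ?_⟩
  · rcases eq_or_ne j i with rfl | hj
    · rw [Pi.single_eq_same]
      refine isHomogeneous_monomial _ ?_
      have := congr_arg Finsupp.degree hdi
      simp only [map_add, Finsupp.degree_single] at this
      omega
    · simp [Pi.single_eq_of_ne hj]
  · rw [dotX_apply, Finset.sum_eq_single i (fun j _ hj => by simp [Pi.single_eq_of_ne hj])
      (by simp), Pi.single_eq_same, X, monomial_mul, one_mul, ← hdi]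
    rfl

variable (σ R) in
/-- `p ↦ [x · p]_{k+1}` on `(P_k)^σ`; its kernel is the Nédélec space `R_k`. -/
noncomputable def nedelecMap (k : ℕ) : (σ → restrictTotalDegree σ R k) →ₗ[R] MvPolynomial σ R :=
  homogeneousComponent (k + 1) ∘ₗ dotX σ R ∘ₗ
    LinearMap.piMap fun _ => (restrictTotalDegree σ R k).subtype

theorem nedelecMap_apply (k : ℕ) (p : σ → restrictTotalDegree σ R k) :
    nedelecMap σ R k p = homogeneousComponent (k + 1) (dotX σ R fun i => p i) :=
  rfl

theorem range_nedelecMap (k : ℕ) :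
    LinearMap.range (nedelecMap σ R k) = homogeneousSubmodule σ R (k + 1) := by
  refine le_antisymm ?_ fun φ hφ => ?_
  · rintro _ ⟨p, rfl⟩
    exact homogeneousComponent_mem _ _
  obtain ⟨p, hp, rfl⟩ := homogeneousSubmodule_succ_le_map_dotX k hφ
  refine ⟨fun i => ⟨p i, (mem_restrictTotalDegree _ _ _).2 (hp i trivial).totalDegree_le⟩, ?_⟩
  exact homogeneousComponent_eq_self hφ

end CommSemiring

section Field

variable {σ : Type*} [Fintype σ] (K : Type*) [Field K]

theorem finrank_homogeneousSubmodule (n : ℕ) :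
    Module.finrank K (homogeneousSubmodule σ K n) = (Fintype.card σ).multichoose n := by
  rw [← Finsupp.natCard_setOf_degree_eq,
    ← Module.finrank_eq_nat_card_basis (basisRestrictSupport K _),
    homogeneousSubmodule_eq_finsupp_supported]
  rfl

theorem finrank_restrictTotalDegree (n : ℕ) :
    Module.finrank K (restrictTotalDegree σ K n) =
      (n + Fintype.card σ).choose (Fintype.card σ) := by
  rw [← Finsupp.natCard_setOf_degree_le,
    ← Module.finrank_eq_nat_card_basis (basisRestrictSupport K _)]
  rfl

theorem finrank_ker_nedelecMap_add (k : ℕ) :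
    Module.finrank K (LinearMap.ker (nedelecMap σ K k)) +
        (Fintype.card σ).multichoose (k + 1) =
      Fintype.card σ * (k + Fintype.card σ).choose (Fintype.card σ) := by
  rw [← finrank_homogeneousSubmodule K, ← range_nedelecMap, add_comm,
    LinearMap.finrank_range_add_finrank_ker, Module.finrank_pi_fintype]
  simp [finrank_restrictTotalDegree]

end Field

section Infinite

variable {σ ι R : Type*} [CommRing R] [IsDomain R] [Infinite R]

theorem evalPi_comp_piMap_subtype_injective (S : Submodule R (MvPolynomial σ R)) :
    Function.Injective (evalPi σ R ∘ₗ LinearMap.piMap fun _ : ι => S.subtype) := by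
  intro p q h
  ext i : 1
  exact Subtype.ext <| MvPolynomial.funext fun x => congrFun (congrFun h x) i

end Infinite

end MvPolynomial

theorem isPolyDeg_sub_one_iff (k : ℕ) (u : (Fin 3 → ℝ) → ℝ) :
    IsPolyDeg ((k : ℤ) - 1) u ↔ ∃ p : MvPolynomial (Fin 3) ℝ,
      p.totalDegree ≤ k ∧ homogeneousComponent k p = 0 ∧ ∀ x, eval x p = u x := by
  simp only [IsPolyDeg, zero_or_totalDegree_le_sub_one_iff, and_assoc]

theorem memS_iff (k : ℕ) (v : (Fin 3 → ℝ) → Fin 3 → ℝ) :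
    MemS k v ↔ ∃ q : Fin 3 → MvPolynomial (Fin 3) ℝ,
      (∀ i, (q i).IsHomogeneous k) ∧ dotX (Fin 3) ℝ q = 0 ∧ evalPi (Fin 3) ℝ q = v := by
  constructor
  · rintro ⟨hv, hdot⟩
    choose q hq hqv using hv
    refine ⟨q, hq, MvPolynomial.funext fun x => ?_, ?_⟩
    · simpa [eval_dotX, hqv] using hdot x
    · ext x i
      exact hqv i x
  · rintro ⟨q, hq, hdot, rfl⟩
    refine ⟨fun i => ⟨q i, hq i, fun x => rfl⟩, fun x => ?_⟩
    simpa [eval_dotX, evalPi_apply] using congr_arg (eval x) hdot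

theorem IsPolyDeg.eq_zero_of_isHomogeneous {k : ℕ} {u : (Fin 3 → ℝ) → ℝ}
    (hu : IsPolyDeg ((k : ℤ) - 1) u) {q : MvPolynomial (Fin 3) ℝ} (hq : q.IsHomogeneous k)
    (hqu : ∀ x, eval x q = u x) : u = 0 := by
  obtain ⟨p, -, hp0, hpu⟩ := (isPolyDeg_sub_one_iff k u).1 hu
  have hpq : p = q := MvPolynomial.funext fun x => (hpu x).trans (hqu x).symm
  rw [hpq, homogeneousComponent_eq_self hq] at hp0
  ext x
  rw [← hqu, hp0, map_zero, Pi.zero_apply]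

theorem eq_zero_of_isVecPolyDeg_of_memS {k : ℕ} {v : (Fin 3 → ℝ) → Fin 3 → ℝ}
    (h₁ : IsVecPolyDeg ((k : ℤ) - 1) v) (h₂ : MemS k v) : v = 0 := by
  ext x i
  obtain ⟨q, hq, hqv⟩ := h₂.1 i
  exact congrFun ((h₁ i).eq_zero_of_isHomogeneous hq hqv) x

theorem memR_iff (k : ℕ) (v : (Fin 3 → ℝ) → Fin 3 → ℝ) :
    MemR k v ↔ ∃ p ∈ LinearMap.ker (nedelecMap (Fin 3) ℝ k),
      evalPi (Fin 3) ℝ (fun i => (p i : MvPolynomial (Fin 3) ℝ)) = v := by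
  constructor
  · rintro ⟨v₁, v₂, h₁, h₂, rfl⟩
    choose p hpk hp0 hpv using fun i => (isPolyDeg_sub_one_iff k _).1 (h₁ i)
    obtain ⟨q, hq, hqdot, rfl⟩ := (memS_iff k v₂).1 h₂
    have hmem (i : Fin 3) : p i + q i ∈ restrictTotalDegree (Fin 3) ℝ k :=
      (mem_restrictTotalDegree _ _ _).2 <|
        (totalDegree_add _ _).trans (max_le (hpk i) (hq i).totalDegree_le)
    refine ⟨fun i => ⟨p i + q i, hmem i⟩, ?_, ?_⟩
    · rw [LinearMap.mem_ker, nedelecMap_apply, homogeneousComponent_dotX]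
      simpa [hp0, homogeneousComponent_eq_self (hq _)] using hqdot
    · ext x i
      simp [evalPi_apply, hpv]
  · rintro ⟨p, hp, rfl⟩
    set q : Fin 3 → MvPolynomial (Fin 3) ℝ := fun i => homogeneousComponent k (p i)
    have hq (i : Fin 3) : (q i).IsHomogeneous k := homogeneousComponent_isHomogeneous k _
    refine ⟨evalPi (Fin 3) ℝ fun i => (p i : MvPolynomial (Fin 3) ℝ) - q i, evalPi (Fin 3) ℝ q,
      fun i => (isPolyDeg_sub_one_iff k _).2 ⟨_, ?_, ?_, fun x => rfl⟩,
      (memS_iff k _).2 ⟨q, hq, ?_, rfl⟩, ?_⟩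
    · exact (totalDegree_sub _ _).trans (max_le ((mem_restrictTotalDegree _ _ _).1 (p i).2)
        (hq i).totalDegree_le)
    · rw [map_sub, homogeneousComponent_eq_self (hq i), sub_self]
    · rwa [LinearMap.mem_ker, nedelecMap_apply, homogeneousComponent_dotX] at hp
    · rw [← map_add]
      congr 1
      ext i
      simp

theorem setOf_memR_eq (k : ℕ) :
    {v | MemR k v} = ((LinearMap.ker (nedelecMap (Fin 3) ℝ k)).map (evalPi (Fin 3) ℝ ∘ₗ
      LinearMap.piMap fun _ => (restrictTotalDegree (Fin 3) ℝ k).subtype) : Set _) := by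
  ext v
  rw [Set.mem_ofPred_eq, memR_iff, SetLike.mem_coe, Submodule.mem_map]
  rfl

namespace Nat

theorem six_mul_choose_three (n : ℕ) : 6 * (n + 3).choose 3 = (n + 1) * (n + 2) * (n + 3) := by
  have := descFactorial_eq_factorial_mul_choose (n + 3) 3
  simp [descFactorial_succ, factorial] at this
  linarith

theorem two_mul_multichoose_three (n : ℕ) : 2 * (3 : ℕ).multichoose (n + 1) = (n + 2) * (n + 3) := by
  rw [multichoose_eq, show 3 + (n + 1) - 1 = n + 1 + 2 by omega, choose_symm_add]
  have := descFactorial_eq_factorial_mul_choose (n + 1 + 2) 2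
  simp [descFactorial_succ, factorial] at this
  linarith

end Nat

theorem stmt_9_general (k : ℕ) :
    (∀ v : (Fin 3 → ℝ) → (Fin 3 → ℝ), IsVecPolyDeg ((k : ℤ) - 1) v → MemS k v → v = 0) ∧
    Module.finrank ℝ ↥(Submodule.span ℝ {v : (Fin 3 → ℝ) → (Fin 3 → ℝ) | MemR k v}) =
      k * (k + 2) * (k + 3) / 2 := by
  refine ⟨fun v => eq_zero_of_isVecPolyDeg_of_memS, ?_⟩
  rw [setOf_memR_eq, Submodule.span_eq, ← (Submodule.equivMapOfInjective _
    (evalPi_comp_piMap_subtype_injective (restrictTotalDegree (Fin 3) ℝ k)) _).finrank_eq]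
  have hdim := finrank_ker_nedelecMap_add ℝ (σ := Fin 3) k
  have hM := Nat.two_mul_multichoose_three k
  have hC := Nat.six_mul_choose_three k
  simp only [Fintype.card_fin] at hdim
  have : 2 * Module.finrank ℝ (LinearMap.ker (nedelecMap (Fin 3) ℝ k)) =
      k * (k + 2) * (k + 3) := by
    linarith
  omega

/-- R_k = 𝐏_{k-1} ⊕ S_k is a direct sum of dimension k(k+2)(k+3)/2. -/
theorem stmt_9 (k : ℕ) (hk : 1 ≤ k) :
    (∀ v : (Fin 3 → ℝ) → (Fin 3 → ℝ), IsVecPolyDeg ((k : ℤ) - 1) v → MemS k v → v = 0) ∧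
    Module.finrank ℝ ↥(Submodule.span ℝ {v : (Fin 3 → ℝ) → (Fin 3 → ℝ) | MemR k v}) =
      k * (k + 2) * (k + 3) / 2 :=
  stmt_9_general k
end

section
/- Unisolvence kernel lemma on the reference tetrahedron: let K̂ = {x ∈ ℝ³ : x₁ ≥ 0, x₂ ≥ 0, x₃ ≥ 0, x₁ + x₂ + x₃ ≤ 1} and let φ₁, φ₂, φ₃ : ℝ³ → ℝ be polynomial functions. If ∫_{K̂} ( x₁ φ₁(x)² + x₂ φ₂(x)² + x₃ φ₃(x)² ) dx = 0, then φ₁ = φ₂ = φ₃ = 0 identically on ℝ³. -/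
/-!
The integrand is continuous and nonnegative on `K̂`, so a vanishing integral forces it to vanish
on the open cube `(0, 1/3)³ ⊆ K̂`. There every weight `xᵢ` is positive, so each `φᵢ` vanishes on
the cube; a polynomial vanishing on a product of infinite sets is the zero polynomial.
-/

open MeasureTheory

open Set

theorem eqOn_zero_of_setIntegral_eq_zero {X : Type*} [TopologicalSpace X] [MeasurableSpace X]
    [OpensMeasurableSpace X] {μ : Measure X} [μ.IsOpenPosMeasure] {f : X → ℝ} {s U : Set X}
    (hU : IsOpen U) (hUs : U ⊆ s) (hf : ContinuousOn f U) (hf_nonneg : 0 ≤ᵐ[μ.restrict s] f)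
    (hfi : IntegrableOn f s μ) (h : ∫ x in s, f x ∂μ = 0) : EqOn f 0 U :=
  Measure.eqOn_open_of_ae_eq (μ := μ)
    (ae_restrict_of_ae_restrict_of_subset hUs
      ((setIntegral_eq_zero_iff_of_nonneg_ae hf_nonneg hfi).1 h)) hU hf continuousOn_const

theorem eq_zero_of_sum_mul_sq_eq_zero {ι : Type*} [Fintype ι] {w v : ι → ℝ}
    (hw : ∀ i, 0 < w i) (h : ∑ i, w i * v i ^ 2 = 0) (i : ι) : v i = 0 := by
  have hterm : w i * v i ^ 2 = 0 :=
    (Finset.sum_eq_zero_iff_of_nonneg fun j _ => mul_nonneg (hw j).le (sq_nonneg _)).1 h i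
      (Finset.mem_univ i)
  simpa [(hw i).ne'] using hterm

namespace IsPolyFun

theorem continuous {u : (Fin 3 → ℝ) → ℝ} (hu : IsPolyFun u) : Continuous u := by
  obtain ⟨p, hp⟩ := hu
  simpa only [hp] using MvPolynomial.continuous_eval p

theorem eq_zero_of_eqOn_pi {u : (Fin 3 → ℝ) → ℝ} (hu : IsPolyFun u) {s : Fin 3 → Set ℝ}
    (hs : ∀ i, (s i).Infinite) (h : EqOn u 0 (univ.pi s)) : u = 0 := by
  obtain ⟨p, hp⟩ := hu
  have hp0 : p = 0 := MvPolynomial.funext_set s hs fun x hx => by simp [hp, h hx]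
  funext x
  simp [← hp, hp0]

end IsPolyFun

def refTetrahedron : Set (Fin 3 → ℝ) :=
  {x | 0 ≤ x 0 ∧ 0 ≤ x 1 ∧ 0 ≤ x 2 ∧ x 0 + x 1 + x 2 ≤ 1}

theorem measurableSet_refTetrahedron : MeasurableSet refTetrahedron := by
  unfold refTetrahedron
  measurability

theorem refTetrahedron_subset_Icc : refTetrahedron ⊆ Icc 0 1 := by
  rintro x ⟨h0, h1, h2, hsum⟩
  refine ⟨fun i => ?_, fun i => ?_⟩ <;> fin_cases i <;> simp <;> linarith

theorem univ_pi_Ioo_subset_refTetrahedron :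
    univ.pi (fun _ => Ioo 0 (1 / 3)) ⊆ refTetrahedron := by
  intro x hx
  obtain ⟨h0, h0'⟩ := hx 0 (mem_univ 0)
  obtain ⟨h1, h1'⟩ := hx 1 (mem_univ 1)
  obtain ⟨h2, h2'⟩ := hx 2 (mem_univ 2)
  exact ⟨h0.le, h1.le, h2.le, by linarith⟩

/-- unisolvence kernel lemma on the reference tetrahedron. -/
theorem stmt_16 (φ : Fin 3 → (Fin 3 → ℝ) → ℝ) (hφ : ∀ i, IsPolyFun (φ i))
    (h : ∫ x in {x : Fin 3 → ℝ | 0 ≤ x 0 ∧ 0 ≤ x 1 ∧ 0 ≤ x 2 ∧ x 0 + x 1 + x 2 ≤ 1},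
        (x 0 * (φ 0 x) ^ 2 + x 1 * (φ 1 x) ^ 2 + x 2 * (φ 2 x) ^ 2) = 0) :
    ∀ i, ∀ x, φ i x = 0 := by
  set f : (Fin 3 → ℝ) → ℝ := fun x => ∑ i, x i * φ i x ^ 2
  set cube : Set (Fin 3 → ℝ) := univ.pi fun _ => Ioo 0 (1 / 3)
  have hf : Continuous f :=
    continuous_finsetSum _ fun i _ => (continuous_apply i).mul ((hφ i).continuous.pow 2)
  have hf_nonneg : 0 ≤ᵐ[volume.restrict refTetrahedron] f := by
    refine ae_restrict_of_forall_mem measurableSet_refTetrahedron fun x ⟨h0, h1, h2, _⟩ => ?_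
    simp only [f, Fin.sum_univ_three]
    positivity
  have hf_cube : EqOn f 0 cube :=
    eqOn_zero_of_setIntegral_eq_zero (isOpen_set_pi finite_univ fun _ _ => isOpen_Ioo)
      univ_pi_Ioo_subset_refTetrahedron hf.continuousOn hf_nonneg
      (hf.integrableOn_Icc.mono_set refTetrahedron_subset_Icc)
      (by simp only [f, Fin.sum_univ_three]; exact h)
  have hφ_cube (i : Fin 3) : EqOn (φ i) 0 cube := fun x hx =>
    eq_zero_of_sum_mul_sq_eq_zero (fun j => (hx j (mem_univ j)).1) (hf_cube hx) i
  intro i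
  exact congrFun ((hφ i).eq_zero_of_eqOn_pi (fun _ => Ioo_infinite (by norm_num)) (hφ_cube i))
end
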